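/- The relation (−)◇ on states is functional: for every state_i σ and all states_l σ₁' and σ₂', if σ◇ =_σ σ₁' and σ◇ =_σ σ₂' then σ₁' = σ₂'. -/
import Mathlib


/-- λct-terms in de Bruijn notation. -/
inductive CT : Type where
  | var : ℕ → CT
  | app : CT → CT → CT
  | lam : CT → CT
  | catch : CT → CT
  | throw : ℕ → CT → CT

/-- λgs-terms in de Bruijn notation. -/
inductive GS : Type where
  | var : ℕ → GS
  | app : GS → GS → GS
  | lam : GS → GS
  | getc : GS → GS
  | setc : ℕ → GS → GS
/-- A Kgs-machine closure_l [t, L, Lμ, Eμ]: a λgs-term, a local environment (list of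
    closures_l), a list of local environments, and a list of stacks_l. -/
inductive CloL : Type where
  | mk : GS → List CloL → List (List CloL) → List (List CloL) → CloL

/-- A Kgs-machine state_l ≺t, L, Lμ, Eμ, S≻. -/
structure LState : Type where
  t : GS
  L : List CloL
  Lμ : List (List CloL)
  Eμ : List (List CloL)
  S : List CloL

/-- The transition relation ⇝^l of the Kgs-machine. -/
inductive StepGS : LState → LState → Prop where
  | var : ∀ {k L Lμ Eμ S t L' Lμ' Eμ'}, L[k]? = some (CloL.mk t L' Lμ' Eμ') →
      StepGS ⟨.var k, L, Lμ, Eμ, S⟩ ⟨t, L', Lμ', Eμ', S⟩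
  | app : ∀ {t u L Lμ Eμ S},
      StepGS ⟨.app t u, L, Lμ, Eμ, S⟩ ⟨t, L, Lμ, Eμ, CloL.mk u L Lμ Eμ :: S⟩
  | lam : ∀ {t L Lμ Eμ c S},
      StepGS ⟨.lam t, L, Lμ, Eμ, c :: S⟩ ⟨t, c :: L, Lμ, Eμ, S⟩
  | getc : ∀ {t L Lμ Eμ S},
      StepGS ⟨.getc t, L, Lμ, Eμ, S⟩ ⟨t, L, L :: Lμ, S :: Eμ, S⟩
  | setc : ∀ {α t L Lμ Eμ S L' S'}, Lμ[α]? = some L' → Eμ[α]? = some S' →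
      StepGS ⟨.setc α t, L, Lμ, Eμ, S⟩ ⟨t, L', Lμ, Eμ, S'⟩
/-- A Kgs^it-machine closure_i [t, n, I, Iμ, E, Eμ]: a λgs-term, a natural number, a
    vector, a table, a global environment (list of closures_i) and a list of stacks_i. -/
inductive CloI : Type where
  | mk : GS → ℕ → List ℕ → List (List ℕ) → List CloI → List (List CloI) → CloI

/-- A Kgs^it-machine state_i ≺t, n, I, Iμ, E, Eμ, S≻. -/
structure IState : Type where
  t : GS
  n : ℕ
  I : List ℕ
  Iμ : List (List ℕ)
  E : List CloI
  Eμ : List (List CloI)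
  S : List CloI

/-- The transition relation ⇝^i of the Kgs^it-machine. -/
inductive StepIT : IState → IState → Prop where
  | var : ∀ {l n I Iμ E Eμ S k g t n' I' Iμ' E' Eμ'},
      I[l]? = some k → n - k = g → E[g]? = some (CloI.mk t n' I' Iμ' E' Eμ') →
      StepIT ⟨.var l, n, I, Iμ, E, Eμ, S⟩ ⟨t, n', I', Iμ', E', Eμ', S⟩
  | app : ∀ {t u n I Iμ E Eμ S},
      StepIT ⟨.app t u, n, I, Iμ, E, Eμ, S⟩
             ⟨t, n, I, Iμ, E, Eμ, CloI.mk u n I Iμ E Eμ :: S⟩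
  | lam : ∀ {t n I Iμ E Eμ c S},
      StepIT ⟨.lam t, n, I, Iμ, E, Eμ, c :: S⟩
             ⟨t, n + 1, (n + 1) :: I, Iμ, c :: E, Eμ, S⟩
  | getc : ∀ {t n I Iμ E Eμ S},
      StepIT ⟨.getc t, n, I, Iμ, E, Eμ, S⟩ ⟨t, n, I, I :: Iμ, E, S :: Eμ, S⟩
  | setc : ∀ {α t n I Iμ E Eμ S I' S'}, Iμ[α]? = some I' → Eμ[α]? = some S' →
      StepIT ⟨.setc α t, n, I, Iμ, E, Eμ, S⟩ ⟨t, n, I', Iμ, E, Eμ, S'⟩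
mutual
/-- The relation c◇ =_c c' between closures_i and closures_l. -/
inductive DiaC : CloI → CloL → Prop where
  | mk : ∀ {t n I Iμ E Eμ L Lμ Eμ'},
      Flatten n E I L → FlattenT n E Iμ Lμ → DiaK Eμ Eμ' →
      DiaC (CloI.mk t n I Iμ E Eμ) (CloL.mk t L Lμ Eμ')

/-- The relation flatten n E I = L. -/
inductive Flatten : ℕ → List CloI → List ℕ → List CloL → Prop where
  | nil : ∀ {n E}, Flatten n E [] []
  | cons : ∀ {n E k I c c' L}, E[n - k]? = some c → DiaC c c' → Flatten n E I L →
      Flatten n E (k :: I) (c' :: L)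

/-- map (flatten n E) applied to a table. -/
inductive FlattenT : ℕ → List CloI → List (List ℕ) → List (List CloL) → Prop where
  | nil : ∀ {n E}, FlattenT n E [] []
  | cons : ∀ {n E I L Iμ Lμ}, Flatten n E I L → FlattenT n E Iμ Lμ →
      FlattenT n E (I :: Iμ) (L :: Lμ)

/-- Element-wise application of ◇ to stacks. -/
inductive DiaE : List CloI → List CloL → Prop where
  | nil : DiaE [] []
  | cons : ∀ {c c' S S'}, DiaC c c' → DiaE S S' → DiaE (c :: S) (c' :: S')

/-- Element-wise application of ◇ to lists of stacks. -/
inductive DiaK : List (List CloI) → List (List CloL) → Prop where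
  | nil : DiaK [] []
  | cons : ∀ {S S' Eμ Eμ'}, DiaE S S' → DiaK Eμ Eμ' → DiaK (S :: Eμ) (S' :: Eμ')
end

/-- The relation σ◇ =_σ σ' between states_i and states_l. -/
inductive DiaS : IState → LState → Prop where
  | mk : ∀ {t n I Iμ E Eμ L Lμ Eμ' S S'},
      DiaC (CloI.mk t n I Iμ E Eμ) (CloL.mk t L Lμ Eμ') → DiaE S S' →
      DiaS ⟨t, n, I, Iμ, E, Eμ, S⟩ ⟨t, L, Lμ, Eμ', S'⟩



theorem diaC_fun : ∀ {c c₁}, DiaC c c₁ → ∀ {c₂}, DiaC c c₂ → c₁ = c₂ := by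
  intro c c₁ h
  refine DiaC.rec
    (motive_1 := fun c c₁ _ => ∀ {c₂}, DiaC c c₂ → c₁ = c₂)
    (motive_2 := fun n E I L _ => ∀ {L₂}, Flatten n E I L₂ → L = L₂)
    (motive_3 := fun n E Iμ Lμ _ => ∀ {Lμ₂}, FlattenT n E Iμ Lμ₂ → Lμ = Lμ₂)
    (motive_4 := fun S S₁ _ => ∀ {S₂}, DiaE S S₂ → S₁ = S₂)
    (motive_5 := fun Eμ Eμ₁ _ => ∀ {Eμ₂}, DiaK Eμ Eμ₂ → Eμ₁ = Eμ₂)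
    ?_ ?_ ?_ ?_ ?_ ?_ ?_ ?_ ?_ h
  · intro t n I Iμ E Eμ L Lμ Eμ' _ _ _ ih1 ih2 ih3 c₂ h₂
    cases h₂ with
    | mk hf hft hk => rw [ih1 hf, ih2 hft, ih3 hk]
  · intro n E L₂ h₂
    cases h₂; rfl
  · intro n E k I c c' L he _ _ ihc ihL L₂ h₂
    cases h₂ with
    | cons he2 hc2 hL2 =>
      rw [he] at he2
      cases he2
      rw [ihc hc2, ihL hL2]
  · intro n E Lμ₂ h₂
    cases h₂; rfl
  · intro n E I L Iμ Lμ _ _ ihL ihT Lμ₂ h₂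
    cases h₂ with
    | cons hL2 hT2 => rw [ihL hL2, ihT hT2]
  · intro S₂ h₂
    cases h₂; rfl
  · intro c c' S S' _ _ ihc ihS S₂ h₂
    cases h₂ with
    | cons hc2 hS2 => rw [ihc hc2, ihS hS2]
  · intro Eμ₂ h₂
    cases h₂; rfl
  · intro S S' Eμ Eμ' _ _ ihS ihK Eμ₂ h₂
    cases h₂ with
    | cons hS2 hK2 => rw [ihS hS2, ihK hK2]

theorem diaE_fun : ∀ {S S₁ S₂}, DiaE S S₁ → DiaE S S₂ → S₁ = S₂ := by
  intro S
  induction S with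
  | nil => intro S₁ S₂ h₁ h₂; cases h₁; cases h₂; rfl
  | cons c S ih =>
    intro S₁ S₂ h₁ h₂
    cases h₁ with
    | cons hc1 hS1 =>
      cases h₂ with
      | cons hc2 hS2 => rw [diaC_fun hc1 hc2, ih hS1 hS2]

theorem statement_12 (σ : IState) (σ₁' σ₂' : LState)
    (h₁ : DiaS σ σ₁') (h₂ : DiaS σ σ₂') : σ₁' = σ₂' := by
  cases h₁ with
  | mk hc hs =>
    cases h₂ with
    | mk hc2 hs2 =>
      cases diaC_fun hc hc2
      cases diaE_fun hs hs2
      rfl
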